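/- Let f : O → O be a bijection with lifted map F, let π be a policy assigning to each HL state a set of applicable ground actions, and define the pushforward policy F_*π by (F_*π)(F(s)) = {F(a) : a ∈ π(s)}. Then for every horizon m ∈ ℕ: π solves the problem (s₀, G) within m steps (meaning every π-execution from s₀ — every sequence s₀, s₁, …, s_m with s_{t+1} ∈ succ(s_t, a_t) for some a_t ∈ π(s_t) whenever G ⊄ s_t — reaches a state containing G within m steps) if and only if F_*π solves (F(s₀), F(G)) within m steps. -/

import Mathlib

namespace Bison

/-- A fact is a predicate symbol together with a list of objects of the
predicate's arity. -/
def HLFact (P O : Type*) (ar : P → ℕ) : Type _ := (p : P) × (Fin (ar p) → O)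

/-- An HL state is a set of facts. -/
abbrev HLState (P O : Type*) (ar : P → ℕ) := Set (HLFact P O ar)

variable {P O : Type*} {ar : P → ℕ}

/-- The lifted map of a bijection `f : O ≃ O` on facts. -/
def liftFact (f : O ≃ O) (φ : HLFact P O ar) : HLFact P O ar :=
  ⟨φ.1, fun i => f (φ.2 i)⟩

/-- The lifted map of a bijection `f : O ≃ O` on states. -/
def liftState (f : O ≃ O) (s : HLState P O ar) : HLState P O ar :=
  liftFact f '' s

/-- A ground action: a precondition and finitely many nondeterministic
outcomes, each with add and delete effects. -/
structure GroundAction (P O : Type*) (ar : P → ℕ) where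
  pre : Set (HLFact P O ar)
  n : ℕ
  add : Fin n → Set (HLFact P O ar)
  del : Fin n → Set (HLFact P O ar)

/-- `a` is applicable in `s` if `pre(a) ⊆ s`. -/
def Applicable (a : GroundAction P O ar) (s : HLState P O ar) : Prop :=
  a.pre ⊆ s

/-- The successor states: `succ(s, a) = {(s \ del_i(a)) ∪ add_i(a) : i}`. -/
def succs (s : HLState P O ar) (a : GroundAction P O ar) :
    Set (HLState P O ar) :=
  { t | ∃ i : Fin a.n, t = (s \ a.del i) ∪ a.add i }

/-- The lifted map of a bijection `f : O ≃ O` on ground actions. -/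
def liftAction (f : O ≃ O) (a : GroundAction P O ar) : GroundAction P O ar where
  pre := liftState f a.pre
  n := a.n
  add := fun i => liftState f (a.add i)
  del := fun i => liftState f (a.del i)

/-- A policy assigns a set of ground actions to each HL state. -/
abbrev Policy (P O : Type*) (ar : P → ℕ) :=
  HLState P O ar → Set (GroundAction P O ar)

/-- `π` solves the problem `(s₀, G)` within `m` steps: every π-execution from
`s₀` — every sequence `s₀, s₁, …, s_m` with `s_{t+1} ∈ succ(s_t, a_t)` for
some `a_t ∈ π(s_t)` whenever `G ⊄ s_t` — reaches a state containing `G`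
within `m` steps. -/
def SolvesWithin (π : Policy P O ar) (s₀ G : HLState P O ar) (m : ℕ) : Prop :=
  ∀ s : ℕ → HLState P O ar, s 0 = s₀ →
    (∀ t, t < m → ¬ G ⊆ s t → ∃ a ∈ π (s t), s (t + 1) ∈ succs (s t) a) →
    ∃ t ≤ m, G ⊆ s t

section Renaming

variable (f : O ≃ O)

lemma liftFact_symm_liftFact (φ : HLFact P O ar) : liftFact f.symm (liftFact f φ) = φ :=
  Sigma.ext rfl (heq_of_eq (funext fun _ => f.symm_apply_apply _))

lemma liftFact_injective : Function.Injective (liftFact f : HLFact P O ar → HLFact P O ar) :=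
  Function.LeftInverse.injective (liftFact_symm_liftFact f)

@[simp]
lemma liftState_symm_liftState (s : HLState P O ar) : liftState f.symm (liftState f s) = s := by
  simp only [liftState, Set.image_image, liftFact_symm_liftFact, Set.image_id']

@[simp]
lemma liftState_liftState_symm (s : HLState P O ar) : liftState f (liftState f.symm s) = s := by
  simpa using liftState_symm_liftState f.symm s

lemma liftState_subset_liftState_iff {s t : HLState P O ar} :
    liftState f s ⊆ liftState f t ↔ s ⊆ t :=
  Set.image_subset_image_iff (liftFact_injective f)

@[simp]
lemma liftAction_symm_liftAction (a : GroundAction P O ar) :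
    liftAction f.symm (liftAction f a) = a := by
  cases a
  simp [liftAction]

lemma liftState_mem_succs {s t : HLState P O ar} {a : GroundAction P O ar} (h : t ∈ succs s a) :
    liftState f t ∈ succs (liftState f s) (liftAction f a) := by
  obtain ⟨i, rfl⟩ := h
  refine ⟨i, ?_⟩
  simp only [liftState, liftAction, Set.image_union, Set.image_sdiff (liftFact_injective f)]

/-- `πF` is the pushforward `F_*π` of `π`. -/
def IsPushforward (π πF : Policy P O ar) : Prop :=
  ∀ s : HLState P O ar, πF (liftState f s) = liftAction f '' π s

variable {f} {π πF : Policy P O ar}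

lemma IsPushforward.symm (h : IsPushforward f π πF) : IsPushforward f.symm πF π := by
  intro s
  rw [← liftState_liftState_symm f s, h, liftState_symm_liftState, Set.image_image]
  simp

/-- The image under `F` of a `π`-execution is an `F_*π`-execution, and `F` preserves and reflects
goal satisfaction. -/
lemma IsPushforward.solvesWithin_of_solvesWithin_lift (h : IsPushforward f π πF)
    {s₀ G : HLState P O ar} {m : ℕ}
    (hF : SolvesWithin πF (liftState f s₀) (liftState f G) m) : SolvesWithin π s₀ G m := by
  intro s hs₀ hstep
  obtain ⟨t, htm, hG⟩ := hF (fun t => liftState f (s t)) (by rw [hs₀]) fun t ht hG => by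
    obtain ⟨a, ha, hsucc⟩ := hstep t ht (mt (liftState_subset_liftState_iff f).2 hG)
    exact ⟨liftAction f a, h (s t) ▸ Set.mem_image_of_mem _ ha, liftState_mem_succs f hsucc⟩
  exact ⟨t, htm, (liftState_subset_liftState_iff f).1 hG⟩

end Renaming

theorem solvesWithin_pushforward_general (f : O ≃ O) (π πF : Policy P O ar)
    (hpush : ∀ s : HLState P O ar, πF (liftState f s) = liftAction f '' π s)
    (s₀ G : HLState P O ar) (m : ℕ) :
    SolvesWithin π s₀ G m ↔
      SolvesWithin πF (liftState f s₀) (liftState f G) m := by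
  have hF : IsPushforward f π πF := hpush
  refine ⟨fun h => hF.symm.solvesWithin_of_solvesWithin_lift ?_,
    hF.solvesWithin_of_solvesWithin_lift⟩
  simpa only [liftState_symm_liftState] using h

/-- Pushforward of policies along a renaming commutes with solving: if `π`
assigns applicable actions and `πF` is the pushforward policy, i.e.
`πF(F(s)) = {F(a) : a ∈ π(s)}` for every state `s`, then for every horizon
`m`, `π` solves `(s₀, G)` within `m` steps iff `πF` solves `(F(s₀), F(G))`
within `m` steps. -/
theorem solvesWithin_pushforward (f : O ≃ O) (π πF : Policy P O ar)
    (hπ : ∀ s : HLState P O ar, ∀ a ∈ π s, Applicable a s)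
    (hpush : ∀ s : HLState P O ar, πF (liftState f s) = liftAction f '' π s)
    (s₀ G : HLState P O ar) (m : ℕ) :
    SolvesWithin π s₀ G m ↔
      SolvesWithin πF (liftState f s₀) (liftState f G) m :=
  solvesWithin_pushforward_general f π πF hpush s₀ G m

end Bison
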